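/- arXiv:2412.10655 — 8 statements merged into one kernel-verified Lean document; each statement's English description precedes it below -/
import Mathlib

section
/- There exist a constant c > 0 and a threshold n₀ such that for every integer n ≥ n₀ and every finite field F with |F| ≥ 2n the following holds. Let t = ⌈10·log₂ n⌉ and let M be the random n×n matrix over F whose i-th row is ∑_{j=1}^{t} v_{i,j}·e_{p_{i,j}}, where all positions p_{i,j} ∈ {1,…,n} and all values v_{i,j} ∈ F are sampled independently and uniformly at random (here e_k is the k-th standard basis row vector, and if the same position is sampled several times in a row, the corresponding values are summed). Then with probability at least c, the matrix M is nonsingular, i.e., its n rows are linearly independent over F. -/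
/-!
Split each sample into its position pattern `P` and its values `V`. Read `P` as a bipartite
graph joining row `i` to every sampled column `P i j`. By Hall's theorem it has a perfect
matching unless some set `A` of rows sends all its samples into a set `B` of `#A - 1` columns;
a union bound over such pairs `(A, B)`, with `t ≥ 10 log n`, shows that this happens for at most
half of the patterns. Once `P` has a perfect matching `σ`, the determinant is a polynomial of
total degree at most `n` in the values, nonzero because it specialises to the permutation matrix
of `σ`; by Schwartz–Zippel it vanishes for at most a fraction `n / |F| ≤ 1/2` of the values.
Hence at least a quarter of all samples give a nonsingular matrix.
-/

open Finset Real

namespace MvPolynomial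

theorem totalDegree_det_le {σ R n : Type*} [CommRing R] [Fintype n] [DecidableEq n]
    (M : Matrix n n (MvPolynomial σ R)) {d : ℕ} (hM : ∀ i j, (M i j).totalDegree ≤ d) :
    M.det.totalDegree ≤ Fintype.card n * d := by
  rw [Matrix.det_apply]
  refine totalDegree_finsetSum_le fun s _ => (totalDegree_smul_le _ _).trans ?_
  refine (totalDegree_finsetProd _ _).trans ?_
  simpa using sum_le_sum fun i (_ : i ∈ univ) => hM (s i) i

variable {σ R : Type*} [Fintype σ] [DecidableEq σ] [CommRing R] [IsDomain R] [Fintype R]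
  [DecidableEq R]

theorem card_eval_eq_zero_mul_le {p : MvPolynomial σ R} (hp : p ≠ 0) :
    #{x : σ → R | eval x p = 0} * Fintype.card R ≤
      p.totalDegree * Fintype.card R ^ Fintype.card σ := by
  set e := Fintype.equivFin σ
  have hp' : rename e p ≠ 0 := by
    rwa [Ne, ← map_zero (rename e), (rename_injective e e.injective).eq_iff]
  have hcard : #{x : σ → R | eval x p = 0} =
      #{f ∈ Fintype.piFinset fun _ => (univ : Finset R) | eval f (rename e p) = 0} :=
    card_equiv (e.arrowCongr (Equiv.refl R)) fun x => by simp [eval_rename, Function.comp_def]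
  have hSZ := schwartz_zippel_totalDegree hp' (univ : Finset R)
  rw [← hcard, card_univ, div_le_div_iff₀ (by positivity) (by positivity)] at hSZ
  calc #{x : σ → R | eval x p = 0} * Fintype.card R
      ≤ (rename e p).totalDegree * Fintype.card R ^ Fintype.card σ := by exact_mod_cast hSZ
    _ ≤ p.totalDegree * Fintype.card R ^ Fintype.card σ :=
      Nat.mul_le_mul_right _ (totalDegree_rename_le e p)

end MvPolynomial

section SparseMatrix

variable {ι τ R : Type*} [Fintype ι] [DecidableEq ι] [Fintype τ]

def sparseMatrix [AddCommMonoid R] (P : ι → τ → ι) (V : ι → τ → R) : Matrix ι ι R :=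
  Matrix.of fun i k => ∑ j, if P i j = k then V i j else 0

def IsMatchable (P : ι → τ → ι) : Prop :=
  ∃ σ : Equiv.Perm ι, ∀ i, ∃ j, P i j = σ i

instance : DecidablePred (IsMatchable : (ι → τ → ι) → Prop) :=
  fun P => inferInstanceAs (Decidable (∃ σ : Equiv.Perm ι, ∀ i, ∃ j, P i j = σ i))

theorem RingHom.mapMatrix_sparseMatrix [Semiring R] {S : Type*} [Semiring S] (f : R →+* S)
    (P : ι → τ → ι) (V : ι → τ → R) :
    f.mapMatrix (sparseMatrix P V) = sparseMatrix P fun i j => f (V i j) := by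
  ext i k
  simp [sparseMatrix, map_sum, apply_ite f]

theorem exists_det_sparseMatrix_ne_zero [CommRing R] [Nontrivial R] {P : ι → τ → ι}
    (hP : IsMatchable P) : ∃ V : ι → τ → R, (sparseMatrix P V).det ≠ 0 := by
  classical
  obtain ⟨σ, hσ⟩ := hP
  choose g hg using hσ
  refine ⟨fun i j => if j = g i then 1 else 0, ?_⟩
  have hperm : sparseMatrix P (fun i j => if j = g i then (1 : R) else 0) = σ.permMatrix R := by
    ext i k
    rw [sparseMatrix, Matrix.of_apply,
      sum_eq_single (g i) (fun j _ hj => by simp [hj]) (by simp)]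
    simp [Equiv.Perm.permMatrix, PEquiv.toMatrix_apply, hg]
  rw [hperm, Matrix.det_permutation]
  rcases Int.units_eq_one_or (Equiv.Perm.sign σ) with h | h <;> simp [h]

variable [DecidableEq τ] {F : Type*} [Field F] [Fintype F] [DecidableEq F]

open MvPolynomial in
theorem card_det_sparseMatrix_eq_zero_mul_le {P : ι → τ → ι} (hP : IsMatchable P) :
    #{V : ι → τ → F | (sparseMatrix P V).det = 0} * Fintype.card F ≤
      Fintype.card ι * Fintype.card (ι → τ → F) := by
  set p : MvPolynomial (ι × τ) F := (sparseMatrix P fun i j => X (i, j)).det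
  have eval_p (V : ι → τ → F) : eval (Function.uncurry V) p = (sparseMatrix P V).det := by
    rw [RingHom.map_det, RingHom.mapMatrix_sparseMatrix]
    simp
  have hp : p ≠ 0 := by
    obtain ⟨V, hV⟩ := exists_det_sparseMatrix_ne_zero (R := F) hP
    intro h
    exact hV (by rw [← eval_p, h, map_zero])
  have hdeg : p.totalDegree ≤ Fintype.card ι := by
    refine (totalDegree_det_le _ (d := 1) fun i k => totalDegree_finsetSum_le fun j _ => ?_).trans
      (mul_one _).le
    split_ifs
    · exact (totalDegree_X _).le
    · simp
  have hcard : #{V : ι → τ → F | (sparseMatrix P V).det = 0} =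
      #{x : ι × τ → F | eval x p = 0} :=
    card_equiv (Equiv.curry ι τ F).symm fun V => by simp [eval_p]
  rw [hcard, ← Fintype.card_congr (Equiv.curry ι τ F), Fintype.card_fun]
  exact (card_eval_eq_zero_mul_le hp).trans (by gcongr)

theorem card_le_two_mul_card_det_sparseMatrix_ne_zero (hF : 2 * Fintype.card ι ≤ Fintype.card F)
    {P : ι → τ → ι} (hP : IsMatchable P) :
    Fintype.card (ι → τ → F) ≤ 2 * #{V : ι → τ → F | (sparseMatrix P V).det ≠ 0} := by
  have hsplit := card_filter_add_card_filter_not (s := univ)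
    fun V : ι → τ → F => (sparseMatrix P V).det = 0
  have hzero := card_det_sparseMatrix_eq_zero_mul_le (F := F) hP
  rw [card_univ] at hsplit
  have hq : 0 < Fintype.card F := Fintype.card_pos
  nlinarith

end SparseMatrix

theorem Nat.choose_le_pow_min (n r : ℕ) : n.choose r ≤ n ^ min r (n - r) := by
  rcases le_total r (n - r) with h | h
  · rw [min_eq_left h]
    exact choose_le_pow n r
  · rw [min_eq_right h]
    rcases le_or_gt r n with hr | hr
    · rw [← choose_symm hr]
      exact choose_le_pow n (n - r)
    · simp [choose_eq_zero_of_lt hr]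

theorem Nat.min_mul_le_two_mul_mul {j n : ℕ} (hj : j < n) :
    min (j + 1) (n - j) * n ≤ 2 * ((j + 1) * (n - j)) := by
  rcases le_total (j + 1) (n - j) with h | h
  · rw [min_eq_left h]
    nlinarith [Nat.sub_add_cancel hj.le]
  · rw [min_eq_right h]
    nlinarith [Nat.sub_add_cancel hj.le]

-- The `j`-th term accounts for `j + 1` rows confined to `j` columns. With
-- `k = min (j + 1) (n - j)`, both binomials are at most `n ^ k`, and `(j + 1) (n - j) ≥ k n / 2`
-- turns the confinement probability into at most `exp (-t / 2) ^ k`.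
theorem choose_mul_choose_mul_pow_le {n j : ℕ} (t : ℕ) (hj : j < n) :
    (n.choose (j + 1) * n.choose j : ℝ) * ((j : ℝ) / n) ^ ((j + 1) * t) ≤
      ((n : ℝ) ^ 2 * exp (-(t / 2))) ^ min (j + 1) (n - j) := by
  set k := min (j + 1) (n - j)
  have hn : (1 : ℝ) ≤ n := by exact_mod_cast hj.trans_le' (Nat.zero_le j)
  have hchoose {r : ℕ} (hr : min r (n - r) ≤ k) : (n.choose r : ℝ) ≤ (n : ℝ) ^ k :=
    calc (n.choose r : ℝ) ≤ (n : ℝ) ^ min r (n - r) := by exact_mod_cast Nat.choose_le_pow_min n r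
      _ ≤ (n : ℝ) ^ k := pow_le_pow_right₀ hn hr
  have hspread : (k : ℝ) / 2 ≤ (j + 1) * ((n - j) / n) := by
    have hnat : (k : ℝ) * n ≤ 2 * ((j + 1) * (n - j)) := by
      rw [← Nat.cast_sub hj.le]
      exact_mod_cast Nat.min_mul_le_two_mul_mul hj
    rw [mul_div_assoc', le_div_iff₀ (by positivity)]
    linarith
  have hratio : ((j : ℝ) / n) ^ ((j + 1) * t) ≤ exp (-(t / 2)) ^ k := by
    calc ((j : ℝ) / n) ^ ((j + 1) * t) ≤ exp ((j : ℝ) / n - 1) ^ ((j + 1) * t) := by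
          gcongr
          linarith [add_one_le_exp ((j : ℝ) / n - 1)]
      _ = exp (((j + 1) * t : ℕ) * -((n - j) / n)) := by
          rw [← exp_nat_mul]
          congr 2
          field_simp
          ring
      _ ≤ exp (k * -(t / 2)) := by
          rw [exp_le_exp]
          push_cast
          nlinarith [(t.cast_nonneg : (0 : ℝ) ≤ t)]
      _ = exp (-(t / 2)) ^ k := exp_nat_mul _ _
  calc (n.choose (j + 1) * n.choose j : ℝ) * ((j : ℝ) / n) ^ ((j + 1) * t)
      ≤ ((n : ℝ) ^ k * (n : ℝ) ^ k) * exp (-(t / 2)) ^ k := by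
        gcongr
        exacts [hchoose (by omega), hchoose (by omega)]
    _ = ((n : ℝ) ^ 2 * exp (-(t / 2))) ^ k := by ring

theorem sum_choose_mul_choose_mul_pow_le {n t : ℕ} (hn : 2 ≤ n) (ht : 10 * log n ≤ t) :
    ∑ j ∈ range n, (n.choose (j + 1) * n.choose j : ℝ) * ((j : ℝ) / n) ^ ((j + 1) * t) ≤
      1 / 2 := by
  set ε := (n : ℝ) ^ 2 * exp (-(t / 2))
  have hn' : (2 : ℝ) ≤ n := by exact_mod_cast hn
  have hdecay : (n : ℝ) ^ 5 * exp (-(t / 2)) ≤ 1 := by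
    rw [← exp_log (by positivity : (0 : ℝ) < n), ← exp_nat_mul, ← exp_add, exp_le_one_iff]
    push_cast
    linarith
  have hε : ε ≤ 1 := by
    refine le_trans (mul_le_mul_of_nonneg_right ?_ (exp_pos _).le) hdecay
    exact pow_le_pow_right₀ (by linarith) (by norm_num)
  calc ∑ j ∈ range n, (n.choose (j + 1) * n.choose j : ℝ) * ((j : ℝ) / n) ^ ((j + 1) * t)
      ≤ ∑ _j ∈ range n, ε := sum_le_sum fun j hj =>
        (choose_mul_choose_mul_pow_le t (mem_range.mp hj)).trans
          (pow_le_of_le_one (by positivity) hε (by simp at hj; omega))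
    _ = n * ε := by rw [sum_const, card_range, nsmul_eq_mul]
    _ ≤ 1 / 2 := by
        have hcube : 2 * (n : ℝ) ^ 3 ≤ (n : ℝ) ^ 5 := by
          have : (2 : ℝ) ≤ (n : ℝ) ^ 2 := by nlinarith
          calc 2 * (n : ℝ) ^ 3 ≤ (n : ℝ) ^ 2 * (n : ℝ) ^ 3 := by gcongr
            _ = (n : ℝ) ^ 5 := by ring
        nlinarith [exp_pos (-(t / 2 : ℝ))]

section Positions

variable {ι τ : Type*} [Fintype ι] [DecidableEq ι] [Fintype τ]

theorem exists_confined_of_not_isMatchable {P : ι → τ → ι} (hP : ¬ IsMatchable P) :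
    ∃ A B : Finset ι, #B + 1 = #A ∧ ∀ i ∈ A, ∀ j, P i j ∈ B := by
  have hHall : ¬ ∀ A : Finset ι, #A ≤ #(A.biUnion fun i => univ.image (P i)) := by
    intro h
    obtain ⟨f, hf, hfP⟩ := (all_card_le_biUnion_card_iff_exists_injective _).mp h
    refine hP ⟨Equiv.ofBijective f (Finite.injective_iff_bijective.mp hf), fun i => ?_⟩
    simpa using hfP i
  simp only [not_forall, not_le] at hHall
  obtain ⟨A, hA⟩ := hHall
  obtain ⟨B, hNB, -, hB⟩ := exists_subsuperset_card_eq
    (subset_univ (A.biUnion fun i => univ.image (P i))) (n := #A - 1)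
    (by omega) (by simpa using (card_le_univ A).trans' (Nat.sub_le _ _))
  refine ⟨A, B, by omega, fun i hi j => hNB ?_⟩
  exact mem_biUnion.mpr ⟨i, hi, mem_image_of_mem _ (mem_univ j)⟩

variable [DecidableEq τ]

theorem card_pi_forall_mem {α : Type*} [Fintype α] [DecidableEq α] (A : Finset ι)
    (B : Finset α) :
    #{P : ι → τ → α | ∀ i ∈ A, ∀ j, P i j ∈ B} =
      #B ^ (#A * Fintype.card τ) * Fintype.card α ^ ((Fintype.card ι - #A) * Fintype.card τ) := by
  have hpi : ({P : ι → τ → α | ∀ i ∈ A, ∀ j, P i j ∈ B} : Finset _) =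
      Fintype.piFinset fun i => Fintype.piFinset fun _ : τ => if i ∈ A then B else univ := by
    ext P
    simp only [mem_filter, mem_univ, true_and, Fintype.mem_piFinset]
    refine ⟨fun h i j => ?_, fun h i hi j => by simpa [hi] using h i j⟩
    split_ifs with hi
    exacts [h i hi j, mem_univ _]
  rw [hpi, Fintype.card_piFinset]
  simp only [Fintype.card_piFinset, prod_const, card_univ, apply_ite card]
  simp only [ite_pow, prod_ite, prod_const, ← pow_mul, filter_mem_eq_inter, univ_inter]
  rw [filter_notMem_eq_sdiff, ← compl_eq_univ_sdiff, card_compl]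
  ring

theorem card_not_isMatchable_le :
    #{P : ι → τ → ι | ¬ IsMatchable P} ≤ ∑ j ∈ range (Fintype.card ι),
      (Fintype.card ι).choose (j + 1) * (Fintype.card ι).choose j *
        (j ^ ((j + 1) * Fintype.card τ) *
          Fintype.card ι ^ ((Fintype.card ι - (j + 1)) * Fintype.card τ)) := by
  have hcover : ({P : ι → τ → ι | ¬ IsMatchable P} : Finset _) ⊆
      (range (Fintype.card ι)).biUnion fun j =>
        (powersetCard (j + 1) univ).biUnion fun A => (powersetCard j univ).biUnion fun B =>
          {P : ι → τ → ι | ∀ i ∈ A, ∀ j, P i j ∈ B} := by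
    intro P hP
    obtain ⟨A, B, hAB, hPAB⟩ := exists_confined_of_not_isMatchable (mem_filter.mp hP).2
    simp only [mem_biUnion, mem_range, mem_powersetCard, subset_univ, true_and, mem_filter,
      mem_univ]
    exact ⟨#B, by have := card_le_univ A; omega, A, hAB.symm, B, rfl, hPAB⟩
  refine (card_le_card hcover).trans <| card_biUnion_le.trans <| sum_le_sum fun j _ =>
    card_biUnion_le.trans ?_
  calc ∑ A ∈ powersetCard (j + 1) univ, #((powersetCard j univ).biUnion fun B =>
          {P : ι → τ → ι | ∀ i ∈ A, ∀ j, P i j ∈ B})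
      ≤ ∑ A ∈ powersetCard (j + 1) univ, ∑ B ∈ powersetCard j (univ : Finset ι),
          #{P : ι → τ → ι | ∀ i ∈ A, ∀ j, P i j ∈ B} := sum_le_sum fun A _ => card_biUnion_le
    _ = _ := by
      rw [sum_congr rfl fun A hA => sum_congr rfl fun B hB => by
        rw [card_pi_forall_mem, (mem_powersetCard.mp hA).2, (mem_powersetCard.mp hB).2]]
      simp [card_powersetCard, mul_assoc]

theorem card_le_two_mul_card_isMatchable (hn : 2 ≤ Fintype.card ι)
    (ht : 10 * log (Fintype.card ι) ≤ Fintype.card τ) :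
    Fintype.card (ι → τ → ι) ≤ 2 * #{P : ι → τ → ι | IsMatchable P} := by
  set n := Fintype.card ι
  set t := Fintype.card τ
  have hcard : Fintype.card (ι → τ → ι) = n ^ (n * t) := by
    rw [Fintype.card_fun, Fintype.card_fun, ← pow_mul, mul_comm]
  have hsplit := card_filter_add_card_filter_not (s := (univ : Finset (ι → τ → ι)))
    fun P => IsMatchable P
  rw [card_univ] at hsplit
  have hbad : (#{P : ι → τ → ι | ¬ IsMatchable P} : ℝ) * 2 ≤ (n : ℝ) ^ (n * t) := by
    calc (#{P : ι → τ → ι | ¬ IsMatchable P} : ℝ) * 2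
        ≤ (∑ j ∈ range n, (n.choose (j + 1) * n.choose j *
            (j ^ ((j + 1) * t) * n ^ ((n - (j + 1)) * t)) : ℕ) : ℝ) * 2 := by
          gcongr
          exact_mod_cast card_not_isMatchable_le
      _ = (∑ j ∈ range n, (n.choose (j + 1) * n.choose j : ℝ) * ((j : ℝ) / n) ^ ((j + 1) * t))
            * (n : ℝ) ^ (n * t) * 2 := by
          push_cast
          congr 1
          rw [sum_mul]
          refine sum_congr rfl fun j hj => ?_
          have hjn : (j + 1) * t + (n - (j + 1)) * t = n * t := by
            rw [← add_mul, Nat.add_sub_cancel' (mem_range.mp hj)]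
          rw [← hjn, pow_add, div_pow]
          field_simp
      _ ≤ 1 / 2 * (n : ℝ) ^ (n * t) * 2 := by
          gcongr
          exact sum_choose_mul_choose_mul_pow_le hn ht
      _ = (n : ℝ) ^ (n * t) := by ring
  have : #{P : ι → τ → ι | ¬ IsMatchable P} * 2 ≤ n ^ (n * t) := by exact_mod_cast hbad
  omega

end Positions

section Assembly

variable {ι τ : Type*} [Fintype ι] [DecidableEq ι] [Fintype τ] [DecidableEq τ]

theorem card_filter_pi_prod {α β : Type*} [Fintype α] [Fintype β]
    (Q : (ι → τ → α) → (ι → τ → β) → Prop) [∀ P V, Decidable (Q P V)] :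
    #{ω : ι → τ → α × β | Q (fun i j => (ω i j).1) (fun i j => (ω i j).2)} =
      ∑ P, #{V | Q P V} := by
  let e : (ι → τ → α × β) ≃ (ι → τ → α) × (ι → τ → β) :=
    (Equiv.piCongrRight fun _ => Equiv.arrowProdEquivProdArrow τ _ _).trans
      (Equiv.arrowProdEquivProdArrow ι _ _)
  rw [card_equiv e (t := {PV | Q PV.1 PV.2}) fun ω => by simp [e]]
  simp only [card_filter, Fintype.sum_prod_type]

theorem card_le_four_mul_card_det_sparseMatrix_ne_zero {F : Type*} [Field F] [Fintype F]
    [DecidableEq F] (hn : 2 ≤ Fintype.card ι) (ht : 10 * log (Fintype.card ι) ≤ Fintype.card τ)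
    (hF : 2 * Fintype.card ι ≤ Fintype.card F) :
    Fintype.card (ι → τ → ι × F) ≤
      4 * #{ω : ι → τ → ι × F |
        (sparseMatrix (fun i j => (ω i j).1) (fun i j => (ω i j).2)).det ≠ 0} := by
  have hcard : Fintype.card (ι → τ → ι × F) =
      Fintype.card (ι → τ → ι) * Fintype.card (ι → τ → F) := by
    simp only [Fintype.card_fun, Fintype.card_prod, mul_pow]
  have hsplit := card_filter_pi_prod fun P (V : ι → τ → F) => (sparseMatrix P V).det ≠ 0
  beta_reduce at hsplit
  rw [hsplit, hcard]
  calc Fintype.card (ι → τ → ι) * Fintype.card (ι → τ → F)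
      ≤ 2 * #{P : ι → τ → ι | IsMatchable P} * Fintype.card (ι → τ → F) := by
        gcongr
        exact card_le_two_mul_card_isMatchable hn ht
    _ = 2 * ∑ P : ι → τ → ι with IsMatchable P, Fintype.card (ι → τ → F) := by
        rw [sum_const, smul_eq_mul, mul_assoc]
    _ ≤ 2 * ∑ P : ι → τ → ι with IsMatchable P,
          2 * #{V : ι → τ → F | (sparseMatrix P V).det ≠ 0} := by
        gcongr with P hP
        exact card_le_two_mul_card_det_sparseMatrix_ne_zero hF (mem_filter.mp hP).2
    _ ≤ 4 * ∑ P, #{V : ι → τ → F | (sparseMatrix P V).det ≠ 0} := by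
        rw [← mul_sum, ← mul_assoc]
        exact Nat.mul_le_mul_left 4 (sum_le_sum_of_subset (filter_subset _ _))

end Assembly

/-- **Random sparse matrices are nonsingular with constant probability.**
There are `c > 0` and `n₀` such that for every `n ≥ n₀` and every finite
field `F` with `|F| ≥ 2n`, if each row of an `n×n` matrix is formed by
sampling `t = ⌈10·log₂ n⌉` position–value pairs independently and uniformly
(summing values landing on the same position), then the resulting matrix is
nonsingular with probability at least `c`.  Probability is measured by
counting sample points `ω : Fin n → Fin t → Fin n × F` (all `n·t` pairs
independent and uniform). -/
theorem random_sparse_matrix_nonsingular :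
    ∃ c : ℝ, c > 0 ∧ ∃ n₀ : ℕ, ∀ n : ℕ, n₀ ≤ n →
      ∀ (F : Type) [Field F] [Fintype F] [DecidableEq F],
        2 * n ≤ Fintype.card F →
        ∀ t : ℕ, t = ⌈10 * Real.logb 2 n⌉₊ →
          c * (Fintype.card (Fin n → Fin t → Fin n × F) : ℝ)
            ≤ ((Finset.univ.filter (fun ω : Fin n → Fin t → Fin n × F =>
                  (Matrix.of fun i k : Fin n =>
                      ∑ j : Fin t, if (ω i j).1 = k then (ω i j).2 else 0).det ≠ 0)).card : ℝ) := by
  refine ⟨1 / 4, by norm_num, 2, fun n hn F _ _ _ hF t ht => ?_⟩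
  have hlog : 10 * log n ≤ t := by
    have hlog2 : log n ≤ logb 2 n := by
      rw [logb, le_div_iff₀ (log_pos one_lt_two)]
      nlinarith [log_nonneg (by exact_mod_cast hn.trans' one_le_two : (1 : ℝ) ≤ n),
        log_two_lt_d9]
    linarith [ht ▸ Nat.le_ceil (10 * logb 2 n)]
  have key := card_le_four_mul_card_det_sparseMatrix_ne_zero (ι := Fin n) (τ := Fin t) (F := F)
    (by simpa using hn) (by simpa using hlog) (by simpa using hF)
  rw [one_div, inv_mul_le_iff₀ (by norm_num)]
  exact_mod_cast key
end

section
/- Let ι be a finite index set and for each i ∈ ι let αᵢ be a finite nonempty type. Let p be a probability mass function on the product type Π_{i∈ι} αᵢ (i.e., p : (Π_i αᵢ) → ℝ≥0 with total mass 1), and for each i let pᵢ denote its i-th marginal, pᵢ(a) = ∑_{x : x_i = a} p(x). Then H(p) ≤ ∑_{i∈ι} H(pᵢ), where H(q) = ∑_x −q(x)·log₂ q(x) denotes Shannon entropy (with the convention 0·log₂ 0 = 0). In other words, among all joint distributions with given marginals, the independent (product) distribution maximizes Shannon entropy. -/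
/-!
Gibbs' inequality `∑ p log (q / p) ≤ ∑ q - ∑ p ≤ 0`, a sum of instances of `log t ≤ t - 1`,
bounds the entropy of `p` by its cross entropy `-∑ p log q` relative to the product `q` of its
marginals. Since `log q(x) = ∑ᵢ log pᵢ(xᵢ)`, that cross entropy is the sum of the entropies of the
marginals.
-/

open Real Finset

lemma negMulLog_le_neg_mul_log_add_sub {p q : ℝ} (hp : 0 ≤ p) (hq : 0 ≤ q)
    (hpq : 0 < p → 0 < q) : negMulLog p ≤ -(p * log q) + (q - p) := by
  rcases hp.eq_or_lt with rfl | hp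
  · simpa using hq
  have hq := hpq hp
  have h : p * log (q / p) ≤ q - p := by
    have := mul_le_mul_of_nonneg_left (log_le_sub_one_of_pos (div_pos hq hp)) hp.le
    rwa [mul_sub, mul_div_cancel₀ _ hp.ne', mul_one] at this
  rw [log_div hq.ne' hp.ne'] at h
  rw [negMulLog]
  linarith

theorem sum_negMulLog_le_sum_neg_mul_log {β : Type*} {s : Finset β} {p q : β → ℝ}
    (hp : ∀ x ∈ s, 0 ≤ p x) (hq : ∀ x ∈ s, 0 ≤ q x) (hpq : ∀ x ∈ s, 0 < p x → 0 < q x)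
    (hsum : ∑ x ∈ s, q x ≤ ∑ x ∈ s, p x) :
    ∑ x ∈ s, negMulLog (p x) ≤ ∑ x ∈ s, -(p x * log (q x)) :=
  calc ∑ x ∈ s, negMulLog (p x)
      ≤ ∑ x ∈ s, (-(p x * log (q x)) + (q x - p x)) :=
        sum_le_sum fun x hx => negMulLog_le_neg_mul_log_add_sub (hp x hx) (hq x hx) (hpq x hx)
    _ ≤ ∑ x ∈ s, -(p x * log (q x)) := by
        rw [sum_add_distrib, sum_sub_distrib]
        linarith

section marginal

variable {ι : Type*} [Fintype ι] [DecidableEq ι] {α : ι → Type*} [∀ i, Fintype (α i)]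
  [∀ i, DecidableEq (α i)]

def marginal (p : (∀ i, α i) → ℝ) (i : ι) (a : α i) : ℝ :=
  ∑ x ∈ univ.filter (fun x : ∀ i, α i => x i = a), p x

variable {p : (∀ i, α i) → ℝ}

lemma marginal_nonneg (hp : ∀ x, 0 ≤ p x) (i : ι) (a : α i) : 0 ≤ marginal p i a :=
  sum_nonneg fun x _ => hp x

lemma le_marginal (hp : ∀ x, 0 ≤ p x) (i : ι) (x : ∀ i, α i) : p x ≤ marginal p i (x i) :=
  single_le_sum (fun y _ => hp y) (mem_filter.2 ⟨mem_univ x, rfl⟩)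

lemma sum_marginal (p : (∀ i, α i) → ℝ) (i : ι) : ∑ a, marginal p i a = ∑ x, p x :=
  sum_fiberwise univ (fun x : ∀ i, α i => x i) p

lemma sum_prod_marginal (p : (∀ i, α i) → ℝ) :
    ∑ x : ∀ i, α i, ∏ i, marginal p i (x i) = (∑ x, p x) ^ Fintype.card ι := by
  simp only [← Fintype.prod_sum, sum_marginal, prod_const, card_univ]

lemma sum_neg_mul_log_marginal (p : (∀ i, α i) → ℝ) (i : ι) :
    ∑ x, -(p x * log (marginal p i (x i))) = ∑ a, negMulLog (marginal p i a) := by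
  rw [← sum_fiberwise univ (fun x : ∀ i, α i => x i)]
  refine sum_congr rfl fun a _ => ?_
  rw [negMulLog, neg_mul, marginal, sum_mul, ← sum_neg_distrib]
  exact sum_congr rfl fun x hx => by rw [(mem_filter.1 hx).2, marginal]

lemma sum_neg_mul_log_prod_marginal (hp : ∀ x, 0 ≤ p x) :
    ∑ x, -(p x * log (∏ i, marginal p i (x i))) = ∑ i, ∑ a, negMulLog (marginal p i a) := by
  have h : ∀ x, -(p x * log (∏ i, marginal p i (x i)))
      = ∑ i, -(p x * log (marginal p i (x i))) := fun x => by
    rcases (hp x).eq_or_lt with hx | hx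
    · simp [← hx]
    · rw [log_prod fun i _ => (hx.trans_le (le_marginal hp i x)).ne', mul_sum, sum_neg_distrib]
  rw [sum_congr rfl fun x _ => h x, sum_comm]
  exact sum_congr rfl fun i _ => sum_neg_mul_log_marginal p i

theorem sum_negMulLog_le_sum_negMulLog_marginal (hp : ∀ x, 0 ≤ p x) (hp1 : ∑ x, p x = 1) :
    ∑ x, negMulLog (p x) ≤ ∑ i, ∑ a, negMulLog (marginal p i a) := by
  rw [← sum_neg_mul_log_prod_marginal hp]
  refine sum_negMulLog_le_sum_neg_mul_log (fun x _ => hp x)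
    (fun x _ => prod_nonneg fun i _ => marginal_nonneg hp i (x i))
    (fun x _ hx => prod_pos fun i _ => hx.trans_le (le_marginal hp i x)) ?_
  rw [sum_prod_marginal, hp1, one_pow]

end marginal

lemma neg_mul_logb (b x : ℝ) : -(x * logb b x) = negMulLog x / log b := by
  rw [logb, negMulLog]; ring

theorem entropy_le_sum_entropy_marginals_general
    {ι : Type*} [Fintype ι] [DecidableEq ι]
    {α : ι → Type*} [∀ i, Fintype (α i)] [∀ i, DecidableEq (α i)]
    (p : (∀ i, α i) → ℝ) (hp : ∀ x, 0 ≤ p x) (hp1 : ∑ x, p x = 1) :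
    ∑ x, -(p x * Real.logb 2 (p x))
      ≤ ∑ i, ∑ a : α i,
          -((∑ x ∈ Finset.univ.filter (fun x : ∀ i, α i => x i = a), p x)
            * Real.logb 2 (∑ x ∈ Finset.univ.filter (fun x : ∀ i, α i => x i = a), p x)) := by
  change _ ≤ ∑ i, ∑ a, -(marginal p i a * logb 2 (marginal p i a))
  simp only [neg_mul_logb, ← sum_div]
  exact div_le_div_of_nonneg_right (sum_negMulLog_le_sum_negMulLog_marginal hp hp1)
    (log_nonneg one_le_two)

/-- **Independence maximizes entropy given the marginals.**
If `p` is a probability mass function on a finite product `Π i, α i`, then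
its Shannon entropy is at most the sum of the entropies of its marginals. -/
theorem entropy_le_sum_entropy_marginals
    {ι : Type*} [Fintype ι] [DecidableEq ι]
    {α : ι → Type*} [∀ i, Fintype (α i)] [∀ i, DecidableEq (α i)]
    [∀ i, Nonempty (α i)]
    (p : (∀ i, α i) → ℝ) (hp : ∀ x, 0 ≤ p x) (hp1 : ∑ x, p x = 1) :
    ∑ x, -(p x * Real.logb 2 (p x))
      ≤ ∑ i, ∑ a : α i,
          -((∑ x ∈ Finset.univ.filter (fun x : ∀ i, α i => x i = a), p x)
            * Real.logb 2 (∑ x ∈ Finset.univ.filter (fun x : ∀ i, α i => x i = a), p x)) :=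
  entropy_le_sum_entropy_marginals_general p hp hp1
end

section
/- Let V, B, a, s be natural numbers with 0 < a < B, V ≥ 2B, and B − a ≤ s ≤ B + a. Then, as real numbers, (V choose s) ≤ (V choose (B − a)) · (V/(B − a))^{2a}. -/
/-! Each step `k → k + 1` multiplies `V.choose k` by `(V - k) / (k + 1) ≤ V / (B - a)` once
`k ≥ B - a`, and `s` is reached from `B - a` in at most `2a` steps. -/

theorem Nat.cast_choose_succ_le_mul_div (n k : ℕ) :
    (n.choose (k + 1) : ℝ) ≤ n.choose k * (n / (k + 1)) := by
  rw [← mul_div_assoc, le_div_iff₀ (by positivity)]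
  have h : n.choose (k + 1) * (k + 1) ≤ n.choose k * n := by
    rw [Nat.choose_succ_right_eq]
    exact Nat.mul_le_mul_left _ (Nat.sub_le n k)
  exact_mod_cast h

theorem Nat.cast_choose_add_le_mul_div_pow (n : ℕ) {m : ℕ} (hm : 0 < m) (j : ℕ) :
    (n.choose (m + j) : ℝ) ≤ n.choose m * ((n : ℝ) / m) ^ j := by
  induction j with
  | zero => simp
  | succ j ih =>
    have hratio : (n : ℝ) / (↑(m + j) + 1) ≤ n / m :=
      div_le_div_of_nonneg_left (Nat.cast_nonneg n) (by exact_mod_cast hm) (by push_cast; linarith)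
    calc (n.choose (m + j + 1) : ℝ) ≤ n.choose (m + j) * (n / (↑(m + j) + 1)) :=
          Nat.cast_choose_succ_le_mul_div n (m + j)
      _ ≤ n.choose m * ((n : ℝ) / m) ^ j * (n / m) := by gcongr
      _ = n.choose m * ((n : ℝ) / m) ^ (j + 1) := by ring

theorem Nat.cast_choose_le_mul_div_pow {n m k j : ℕ} (hm : 0 < m) (hmk : m ≤ k) (hkj : k ≤ m + j) :
    (n.choose k : ℝ) ≤ n.choose m * ((n : ℝ) / m) ^ j := by
  rcases lt_or_ge n m with hnm | hmn
  · rw [Nat.choose_eq_zero_of_lt (hnm.trans_le hmk), Nat.cast_zero]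
    positivity
  have hone : (1 : ℝ) ≤ n / m := by
    rw [one_le_div₀ (by exact_mod_cast hm)]
    exact_mod_cast hmn
  obtain ⟨i, rfl⟩ := Nat.exists_eq_add_of_le hmk
  calc (n.choose (m + i) : ℝ) ≤ n.choose m * ((n : ℝ) / m) ^ i :=
        Nat.cast_choose_add_le_mul_div_pow n hm i
    _ ≤ n.choose m * ((n : ℝ) / m) ^ j := by gcongr; omega

theorem choose_le_choose_mul_ratio_pow_general (V B a s : ℕ)
    (haB : a < B)
    (hs₁ : B - a ≤ s) (hs₂ : s ≤ B + a) :
    ((V.choose s : ℝ))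
      ≤ (V.choose (B - a) : ℝ) * ((V : ℝ) / ((B : ℝ) - (a : ℝ))) ^ (2 * a) := by
  rw [← Nat.cast_sub haB.le]
  exact Nat.cast_choose_le_mul_div_pow (Nat.sub_pos_of_lt haB) hs₁ (by omega)

/-- For `0 < a < B`, `V ≥ 2B`, and `B − a ≤ s ≤ B + a`, one has
`(V choose s) ≤ (V choose (B − a)) · (V/(B − a))^{2a}` over the reals. -/
theorem choose_le_choose_mul_ratio_pow (V B a s : ℕ)
    (ha : 0 < a) (haB : a < B) (hV : 2 * B ≤ V)
    (hs₁ : B - a ≤ s) (hs₂ : s ≤ B + a) :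
    ((V.choose s : ℝ))
      ≤ (V.choose (B - a) : ℝ) * ((V : ℝ) / ((B : ℝ) - (a : ℝ))) ^ (2 * a) :=
  choose_le_choose_mul_ratio_pow_general V B a s haB hs₁ hs₂
end

section
/- For every natural number n ≥ 2 and every natural number t with t ≥ 10·log₂ n, ∑_{i=1}^{⌈n/2⌉ − 1} (n choose i)·(n choose (i−1))·((i−1)/n)^{i·t} ≤ 1/n, where the sum and all terms are taken over the real numbers. -/
/-!
Each term has `C(n,i) C(n,i-1) ≤ n^{2i}`, while `(i-1)/n ≤ 1/2` and `2^t ≥ n^{10}` give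
`((i-1)/n)^{it} ≤ n^{-10i}`; so each of the fewer than `n` terms is at most `n^{-8i} ≤ n^{-2}`.
-/

open Real

lemma Nat.choose_mul_choose_sub_one_le (n i : ℕ) : n.choose i * n.choose (i - 1) ≤ (n ^ 2) ^ i := by
  rcases Nat.eq_zero_or_pos i with rfl | hi
  · simp
  rcases Nat.eq_zero_or_pos n with rfl | hn
  · simp [Nat.choose_eq_zero_of_lt hi]
  calc n.choose i * n.choose (i - 1) ≤ n ^ i * n ^ i :=
        Nat.mul_le_mul (n.choose_le_pow i)
          ((n.choose_le_pow _).trans (Nat.pow_le_pow_right hn (Nat.sub_le i 1)))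
    _ = (n ^ 2) ^ i := by ring

lemma pow_le_two_pow_of_mul_logb_le {x : ℝ} (hx : 0 < x) {k t : ℕ} (h : k * logb 2 x ≤ t) :
    x ^ k ≤ 2 ^ t := by
  calc x ^ k = (2 : ℝ) ^ (logb 2 x * k) := by
        rw [rpow_mul zero_le_two, rpow_logb two_pos (by norm_num) hx, rpow_natCast]
    _ ≤ (2 : ℝ) ^ (t : ℝ) := rpow_le_rpow_of_exponent_le one_le_two (by linarith)
    _ = 2 ^ t := rpow_natCast 2 t

lemma choose_mul_choose_mul_pow_le_s8 {n i k t : ℕ} (hi : 1 ≤ i) (hin : 2 * i ≤ n)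
    (ht : k * logb 2 n ≤ t) :
    (n.choose i : ℝ) * n.choose (i - 1) * (((i : ℝ) - 1) / n) ^ (i * t)
      ≤ ((n : ℝ) ^ 2 / n ^ k) ^ i := by
  have hn : (0 : ℝ) < n := by norm_cast; omega
  have hx₀ : 0 ≤ ((i : ℝ) - 1) / n := div_nonneg (by simpa using hi) hn.le
  have hx : ((i : ℝ) - 1) / n ≤ 2⁻¹ := by
    rw [div_le_iff₀ hn]
    have : (2 * i : ℝ) ≤ n := by exact_mod_cast hin
    linarith
  have hpow : (((i : ℝ) - 1) / n) ^ t ≤ ((n : ℝ) ^ k)⁻¹ :=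
    calc (((i : ℝ) - 1) / n) ^ t ≤ 2⁻¹ ^ t := pow_le_pow_left₀ hx₀ hx t
      _ = (2 ^ t)⁻¹ := inv_pow 2 t
      _ ≤ ((n : ℝ) ^ k)⁻¹ := inv_anti₀ (by positivity) (pow_le_two_pow_of_mul_logb_le hn ht)
  have hchoose : (n.choose i : ℝ) * n.choose (i - 1) ≤ ((n : ℝ) ^ 2) ^ i := by
    exact_mod_cast n.choose_mul_choose_sub_one_le i
  calc (n.choose i : ℝ) * n.choose (i - 1) * (((i : ℝ) - 1) / n) ^ (i * t)
      = (n.choose i : ℝ) * n.choose (i - 1) * ((((i : ℝ) - 1) / n) ^ t) ^ i := by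
        rw [mul_comm i t, pow_mul]
    _ ≤ ((n : ℝ) ^ 2) ^ i * (((n : ℝ) ^ k)⁻¹) ^ i := by gcongr
    _ = ((n : ℝ) ^ 2 / n ^ k) ^ i := by rw [← mul_pow, div_eq_mul_inv]

lemma sq_div_pow_pow_le_inv_sq {a : ℝ} (ha : 1 ≤ a) {k i : ℕ} (hk : 4 ≤ k) (hi : 1 ≤ i) :
    (a ^ 2 / a ^ k) ^ i ≤ (a ^ 2)⁻¹ := by
  have ha₀ : 0 < a := by linarith
  have hle : a ^ 2 / a ^ k ≤ (a ^ 2)⁻¹ := by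
    rw [div_le_iff₀ (by positivity), inv_mul_eq_div, le_div_iff₀ (by positivity), ← pow_add]
    exact pow_le_pow_right₀ ha hk
  calc (a ^ 2 / a ^ k) ^ i ≤ a ^ 2 / a ^ k :=
        pow_le_of_le_one (by positivity) (hle.trans (inv_le_one_of_one_le₀ (one_le_pow₀ ha)))
          (by omega)
    _ ≤ (a ^ 2)⁻¹ := hle

theorem hall_union_bound_small_sets_general (n t : ℕ)
    (ht : 10 * Real.logb 2 n ≤ (t : ℝ)) :
    ∑ i ∈ Finset.Ico 1 ((n + 1) / 2),
        (n.choose i : ℝ) * (n.choose (i - 1) : ℝ)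
          * (((i : ℝ) - 1) / (n : ℝ)) ^ (i * t)
      ≤ 1 / (n : ℝ) := by
  have hterm : ∀ i ∈ Finset.Ico 1 ((n + 1) / 2),
      (n.choose i : ℝ) * n.choose (i - 1) * (((i : ℝ) - 1) / n) ^ (i * t) ≤ ((n : ℝ) ^ 2)⁻¹ := by
    intro i hi
    rw [Finset.mem_Ico] at hi
    have hn : (1 : ℝ) ≤ n := by norm_cast; omega
    exact (choose_mul_choose_mul_pow_le_s8 (k := 10) hi.1 (by omega) (by exact_mod_cast ht)).trans
      (sq_div_pow_pow_le_inv_sq hn (by norm_num) hi.1)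
  calc _ ≤ ((Finset.Ico 1 ((n + 1) / 2)).card : ℝ) * ((n : ℝ) ^ 2)⁻¹ := by
        simpa using Finset.sum_le_card_nsmul _ _ _ hterm
    _ ≤ n * ((n : ℝ) ^ 2)⁻¹ := by
        gcongr
        rw [Nat.card_Ico]
        omega
    _ = 1 / n := by rw [← div_eq_mul_inv, sq, div_self_mul_self', one_div]

/-- The "small sets" part of the union bound: for `n ≥ 2` and `t ≥ 10·log₂ n`,
`∑_{i=1}^{⌈n/2⌉−1} (n choose i)(n choose (i−1))((i−1)/n)^{i·t} ≤ 1/n`. -/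
theorem hall_union_bound_small_sets (n t : ℕ) (hn : 2 ≤ n)
    (ht : 10 * Real.logb 2 n ≤ (t : ℝ)) :
    ∑ i ∈ Finset.Ico 1 ((n + 1) / 2),
        (n.choose i : ℝ) * (n.choose (i - 1) : ℝ)
          * (((i : ℝ) - 1) / (n : ℝ)) ^ (i * t)
      ≤ 1 / (n : ℝ) :=
  hall_union_bound_small_sets_general n t ht
end

section
/- For all sufficiently large natural numbers n, every natural number t with t ≥ 10·log₂ n, and every natural number i with n/2 ≤ i ≤ n − 1, the inequality n² · (i/(i+1))^{(i+1)·t} · (n/i)^{t} < 1 holds over the reals. Consequently, the function f(i) = n^{−2i}·(i/n)^{i·t} is increasing in i on the range n/2 ≤ i ≤ n. -/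
/-!
Writing `f i = n^{-2i} (i/n)^{it}`, one has `f i = ρ i · f (i+1)` with
`ρ i = n² (i/(i+1))^{(i+1)t} (n/i)^t`. Since `(i/(i+1))^{i+1} ≤ 1/e` and `n/i ≤ 2` for
`i ≥ n/2`, we get `ρ i ≤ n² (2/e)^t`, and `t ≥ 10 log₂ n` makes this `< 1` because
`10 (1 - log 2) > 2 log 2`. Hence `f` increases step by step on `[n/2, n]`.
-/

open Real

noncomputable section

/-- The function `f` of the paper. -/
def weight (n : ℝ) (t i : ℕ) : ℝ :=
  n ^ (-(2 * (i : ℝ))) * ((i : ℝ) / n) ^ (i * t)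

def weightRatio (n : ℝ) (t i : ℕ) : ℝ :=
  n ^ 2 * ((i : ℝ) / ((i : ℝ) + 1)) ^ ((i + 1) * t) * (n / i) ^ t

lemma weight_pos {n : ℝ} (hn : 0 < n) (t : ℕ) {i : ℕ} (hi : 0 < i) : 0 < weight n t i := by
  unfold weight
  positivity

lemma rpow_neg_two_mul_natCast {n : ℝ} (hn : 0 ≤ n) (m : ℕ) :
    n ^ (-(2 * (m : ℝ))) = (n ^ (2 * m))⁻¹ := by
  rw [Real.rpow_neg hn, ← Real.rpow_natCast]
  push_cast
  rfl

lemma weight_eq_weightRatio_mul {n : ℝ} (hn : 0 < n) (t : ℕ) {i : ℕ} (hi : 0 < i) :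
    weight n t i = weightRatio n t i * weight n t (i + 1) := by
  have hi' : (i : ℝ) ≠ 0 := by positivity
  unfold weight weightRatio
  rw [rpow_neg_two_mul_natCast hn.le, rpow_neg_two_mul_natCast hn.le]
  push_cast
  rw [div_pow, div_pow, div_pow, div_pow]
  field_simp
  ring

lemma div_add_one_pow_succ_le_exp_neg_one (i : ℕ) :
    ((i : ℝ) / ((i : ℝ) + 1)) ^ (i + 1) ≤ exp (-1) := by
  have h := one_sub_div_pow_le_exp_neg (n := i + 1) (t := 1) (by simp)
  have hi : (i : ℝ) / ((i : ℝ) + 1) = 1 - 1 / ((i + 1 : ℕ) : ℝ) := by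
    push_cast
    field_simp
    ring
  rwa [hi]

lemma weightRatio_le {n : ℝ} (hn : 0 ≤ n) (t : ℕ) {i : ℕ} (hi : 0 < i) (hni : n ≤ 2 * i) :
    weightRatio n t i ≤ n ^ 2 * (2 * exp (-1)) ^ t := by
  have hi' : (0 : ℝ) < i := by exact_mod_cast hi
  have hfactor : ((i : ℝ) / ((i : ℝ) + 1)) ^ ((i + 1) * t) ≤ exp (-1) ^ t := by
    rw [pow_mul]
    exact pow_le_pow_left₀ (by positivity) (div_add_one_pow_succ_le_exp_neg_one i) t
  have hquot : (n / i) ^ t ≤ 2 ^ t :=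
    pow_le_pow_left₀ (by positivity) ((div_le_iff₀ hi').mpr (by linarith)) t
  calc weightRatio n t i ≤ n ^ 2 * exp (-1) ^ t * 2 ^ t := by
        unfold weightRatio
        gcongr
    _ = n ^ 2 * (2 * exp (-1)) ^ t := by ring

lemma two_mul_log_lt_of_ten_mul_logb_le {n t : ℝ} (hn : 1 < n) (ht : 10 * logb 2 n ≤ t) :
    2 * log n < t * (1 - log 2) := by
  have hlog2 := log_two_gt_d9
  have hlog2' := log_two_lt_d9
  have hlogn : 0 < log n := log_pos hn
  have ht' : 10 * log n ≤ t * log 2 := by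
    rw [logb, mul_div_assoc', div_le_iff₀ (by linarith)] at ht
    exact ht
  nlinarith

lemma sq_mul_two_mul_exp_neg_one_pow_lt_one {n : ℝ} (hn : 1 < n) {t : ℕ}
    (ht : 10 * logb 2 n ≤ t) : n ^ 2 * (2 * exp (-1)) ^ t < 1 := by
  have hlog := two_mul_log_lt_of_ten_mul_logb_le hn ht
  refine (log_neg_iff (by positivity)).mp ?_
  rw [log_mul (by positivity) (by positivity), log_pow, log_pow,
    log_mul (by norm_num) (by positivity), log_exp]
  push_cast
  linarith

end

/-- For all sufficiently large `n`, all `t ≥ 10·log₂ n`, and all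
`n/2 ≤ i ≤ n − 1`, we have `n²·(i/(i+1))^{(i+1)t}·(n/i)^t < 1`;
consequently `f(i) = n^{−2i}·(i/n)^{i·t}` is (strictly) increasing on
`n/2 ≤ i ≤ n`. -/
theorem ratio_lt_one_and_f_increasing :
    ∀ᶠ n : ℕ in Filter.atTop, ∀ t : ℕ, 10 * Real.logb 2 n ≤ (t : ℝ) →
      (∀ i : ℕ, (n : ℝ) / 2 ≤ (i : ℝ) → i ≤ n - 1 →
        (n : ℝ) ^ 2 * ((i : ℝ) / ((i : ℝ) + 1)) ^ ((i + 1) * t)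
            * ((n : ℝ) / (i : ℝ)) ^ t < 1) ∧
      (∀ i j : ℕ, (n : ℝ) / 2 ≤ (i : ℝ) → i < j → j ≤ n →
        (n : ℝ) ^ (-(2 * (i : ℝ))) * ((i : ℝ) / (n : ℝ)) ^ (i * t)
          < (n : ℝ) ^ (-(2 * (j : ℝ))) * ((j : ℝ) / (n : ℝ)) ^ (j * t)) := by
  filter_upwards [Filter.eventually_gt_atTop 1] with n hn t ht
  have hn' : (1 : ℝ) < n := by exact_mod_cast hn
  have half_le_iff {i : ℕ} : (n : ℝ) / 2 ≤ i ↔ n ≤ 2 * i := by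
    rw [div_le_iff₀ two_pos, mul_comm]
    exact_mod_cast Iff.rfl
  have ratio_lt_one (i : ℕ) (hi : n ≤ 2 * i) : weightRatio n t i < 1 :=
    (weightRatio_le (by positivity) t (by omega) (by exact_mod_cast hi)).trans_lt
      (sq_mul_two_mul_exp_neg_one_pow_lt_one hn' ht)
  refine ⟨fun i hi _ => ratio_lt_one i (half_le_iff.mp hi), ?_⟩
  have mono : StrictMonoOn (weight n t) (Set.Icc ((n + 1) / 2) n) := by
    refine strictMonoOn_of_lt_add_one Set.ordConnected_Icc fun i _ hi _ => ?_
    obtain ⟨hi_ge, -⟩ := hi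
    rw [weight_eq_weightRatio_mul (by positivity) t (by omega : 0 < i)]
    exact mul_lt_of_lt_one_left (weight_pos (by positivity) t i.succ_pos)
      (ratio_lt_one i (by omega))
  intro i j hi hij hjn
  have hi := half_le_iff.mp hi
  exact mono ⟨by omega, by omega⟩ ⟨by omega, hjn⟩ hij
end

section
/- Consider the same random bipartite graph model: for each i ∈ {1,…,n}, t indices p_{i,1},…,p_{i,t} ∈ {1,…,n} are sampled independently and uniformly at random, and left vertex i is joined to right vertices p_{i,1},…,p_{i,t}. Then the probability that this graph has no perfect matching (i.e., no permutation σ of {1,…,n} with σ(i) ∈ {p_{i,1},…,p_{i,t}} for all i) is at most ∑_{i=1}^{n} (n choose i)·(n choose (i−1))·((i−1)/n)^{i·t}. -/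
/-!
By Hall's theorem, a sample with no perfect matching has a set `S` of left vertices whose
neighbourhoods all lie in a set `T` of right vertices with `|S| = |T| + 1`. For fixed `S, T` with
`|S| = i` exactly `(i - 1)^(i t) n^((n - i) t)` samples do this, and there are
`(n choose i)(n choose (i - 1))` such pairs, so the union bound over the pairs gives the estimate.
-/

open Finset Fintype

section

variable {α β γ : Type*} [Fintype α] [DecidableEq α]

theorem exists_card_eq_succ_of_not_exists_perm (N : α → Finset α)
    (h : ¬ ∃ σ : Equiv.Perm α, ∀ i, σ i ∈ N i) :
    ∃ S T : Finset α, #S = #T + 1 ∧ ∀ i ∈ S, N i ⊆ T := by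
  obtain ⟨S, hS⟩ : ∃ S : Finset α, #(S.biUnion N) < #S := by
    by_contra! hall
    obtain ⟨f, hf, hfN⟩ := (all_card_le_biUnion_card_iff_exists_injective N).mp hall
    exact h ⟨.ofBijective f (Finite.injective_iff_bijective.mp hf), hfN⟩
  obtain ⟨S', hS'S, hS'⟩ := exists_subset_card_eq (Nat.succ_le_of_lt hS)
  exact ⟨S', S.biUnion N, hS', fun i hi => subset_biUnion_of_mem N (hS'S hi)⟩

variable [Fintype β] [DecidableEq β]

theorem card_filter_forall_mem_forall_apply_mem [Fintype γ] [DecidableEq γ]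
    (S : Finset α) (T : Finset γ) :
    #{ω : α → β → γ | ∀ i ∈ S, ∀ k, ω i k ∈ T}
      = #T ^ (#S * card β) * card γ ^ ((card α - #S) * card β) := by
  have hpi : ({ω : α → β → γ | ∀ i ∈ S, ∀ k, ω i k ∈ T} : Finset _)
      = piFinset fun i => if i ∈ S then piFinset fun _ : β => T else univ := by
    ext ω
    simp only [mem_filter, mem_univ, true_and, mem_piFinset]
    refine forall_congr' fun i => ?_
    split_ifs with hi <;> simp [hi]
  rw [hpi, card_piFinset]
  simp only [apply_ite card, prod_ite, card_piFinset, prod_const, card_univ, card_fun]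
  simp [filter_not, card_univ_sdiff, pow_mul']

theorem filter_not_exists_perm_subset_biUnion :
    ({ω : α → β → α | ¬ ∃ σ : Equiv.Perm α, ∀ i, ∃ k, ω i k = σ i} : Finset _) ⊆
      (Icc 1 (card α)).biUnion fun s =>
        (powersetCard s univ ×ˢ powersetCard (s - 1) univ).biUnion fun ST =>
          {ω | ∀ i ∈ ST.1, ∀ k, ω i k ∈ ST.2} := by
  intro ω hω
  simp only [mem_filter, mem_univ, true_and] at hω
  obtain ⟨S, T, hST, hS_nbhd⟩ := exists_card_eq_succ_of_not_exists_perm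
    (fun i => univ.image (ω i)) (by simpa only [mem_image, mem_univ, true_and] using hω)
  simp only [mem_biUnion, mem_Icc, mem_product, mem_powersetCard, subset_univ, true_and,
    mem_filter, mem_univ]
  refine ⟨#S, ⟨by omega, card_le_univ S⟩, (S, T), ⟨rfl, by dsimp only; omega⟩, fun i hi k => ?_⟩
  exact image_subset_iff.mp (hS_nbhd i hi) k (mem_univ k)

theorem card_filter_not_exists_perm_le :
    #{ω : α → β → α | ¬ ∃ σ : Equiv.Perm α, ∀ i, ∃ k, ω i k = σ i}
      ≤ ∑ s ∈ Icc 1 (card α), (card α).choose s * (card α).choose (s - 1)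
          * ((s - 1) ^ (s * card β) * card α ^ ((card α - s) * card β)) := by
  refine (card_le_card filter_not_exists_perm_subset_biUnion).trans
    (card_biUnion_le.trans (sum_le_sum fun s _ => ?_))
  refine (card_biUnion_le_card_mul _ _
    ((s - 1) ^ (s * card β) * card α ^ ((card α - s) * card β)) fun ST hST => ?_).trans_eq ?_
  · simp only [mem_product, mem_powersetCard] at hST
    rw [card_filter_forall_mem_forall_apply_mem, hST.1.2, hST.2.2]
  · rw [card_product, card_powersetCard, card_powersetCard, card_univ]

end

theorem no_perfect_matching_prob_le_union_bound_general (n t : ℕ) :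
    ((Finset.univ.filter (fun ω : Fin n → Fin t → Fin n =>
          ¬ ∃ σ : Equiv.Perm (Fin n), ∀ i : Fin n, ∃ j : Fin t, ω i j = σ i)).card : ℝ)
      ≤ (∑ i ∈ Finset.Icc 1 n,
            (n.choose i : ℝ) * (n.choose (i - 1) : ℝ)
              * (((i : ℝ) - 1) / (n : ℝ)) ^ (i * t))
          * (Fintype.card (Fin n → Fin t → Fin n) : ℝ) := by
  have hcount : #{ω : Fin n → Fin t → Fin n | ¬ ∃ σ : Equiv.Perm (Fin n), ∀ i, ∃ j, ω i j = σ i}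
      ≤ ∑ s ∈ Icc 1 n, n.choose s * n.choose (s - 1) * ((s - 1) ^ (s * t) * n ^ ((n - s) * t)) := by
    convert card_filter_not_exists_perm_le (α := Fin n) (β := Fin t) <;> simp only [Fintype.card_fin]
  have hcard : (card (Fin n → Fin t → Fin n) : ℝ) = (n : ℝ) ^ (n * t) := by
    simp [pow_mul']
  have hterm : ∀ s ∈ Icc 1 n, ((s - 1 : ℕ) : ℝ) ^ (s * t) * (n : ℝ) ^ ((n - s) * t)
      = (((s : ℝ) - 1) / n) ^ (s * t) * (n : ℝ) ^ (n * t) := by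
    intro s hs
    obtain ⟨hs1, hsn⟩ := mem_Icc.mp hs
    have hn : (n : ℝ) ≠ 0 := Nat.cast_ne_zero.mpr (by omega)
    rw [Nat.cast_sub hs1, Nat.cast_one, div_pow, Nat.sub_mul,
      pow_sub₀ _ hn (Nat.mul_le_mul_right t hsn)]
    field_simp
  rw [hcard, sum_mul]
  calc _ ≤ ∑ s ∈ Icc 1 n, (n.choose s : ℝ) * n.choose (s - 1)
          * (((s - 1 : ℕ) : ℝ) ^ (s * t) * (n : ℝ) ^ ((n - s) * t)) := by exact_mod_cast hcount
    _ = _ := sum_congr rfl fun s hs => by rw [hterm s hs]; ring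

/-- **Union bound for the no-perfect-matching event.**
In the random bipartite graph where each left vertex `i ∈ {1,…,n}` samples
`t` independent uniform right neighbours, the probability that no perfect
matching exists is at most
`∑_{i=1}^{n} (n choose i)(n choose (i−1))((i−1)/n)^{i·t}`.
Probability is measured by counting sample points `ω : Fin n → Fin t → Fin n`. -/
theorem no_perfect_matching_prob_le_union_bound (n t : ℕ) (hn : 0 < n) :
    ((Finset.univ.filter (fun ω : Fin n → Fin t → Fin n =>
          ¬ ∃ σ : Equiv.Perm (Fin n), ∀ i : Fin n, ∃ j : Fin t, ω i j = σ i)).card : ℝ)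
      ≤ (∑ i ∈ Finset.Icc 1 n,
            (n.choose i : ℝ) * (n.choose (i - 1) : ℝ)
              * (((i : ℝ) - 1) / (n : ℝ)) ^ (i * t))
          * (Fintype.card (Fin n → Fin t → Fin n) : ℝ) :=
  no_perfect_matching_prob_le_union_bound_general n t
end

section
/- There exists an absolute constant C > 0 such that the following holds. Let L, V, n be positive integers with 1 ≤ n < L·V, and let p be a probability mass function on {0, 1, …, V} whose mean satisfies L·∑_{s=0}^{V} s·p(s) = n. Then L·∑_{s=0}^{V} p(s)·(log₂(1/p(s)) + log₂ (V choose s)) ≤ log₂ ((L·V) choose n) + C·log₂(L·V), with the convention that a term with p(s) = 0 contributes 0. -/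
/-!
Gibbs' inequality against the weights `C(V,s) tˢ`, with `t = q/(1-q)` and `q = n/(LV)`, shows
that a bucket whose expected size is `Vq` has entropy at most `V·H(q)` (in nats), the value
attained by `V` independent Bernoulli(`q`) coins. Summing over the `L` buckets gives
`U·H(n/U)` with `U = LV`, and `U·H(n/U) ≤ log C(U,n) + log (U+1)` because
`Uᵁ = (n + (U-n))ᵁ` is a sum of `U + 1` binomial terms, the largest of which is the `n`-th,
`C(U,n) nⁿ (U-n)^(U-n)`.
-/

open Finset Real

theorem mul_log_one_div_add_log_le {p q : ℝ} (hp : 0 ≤ p) (hq : 0 < q) :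
    p * (log (1 / p) + log q) ≤ q - p := by
  rcases hp.eq_or_lt with rfl | hp
  · simpa using hq.le
  calc p * (log (1 / p) + log q) = p * log (q / p) := by
        rw [one_div, log_inv, log_div hq.ne' hp.ne']; ring
    _ ≤ p * (q / p - 1) := mul_le_mul_of_nonneg_left (log_le_sub_one_of_pos (by positivity)) hp.le
    _ = q - p := by field_simp

theorem sum_mul_log_one_div_add_log_le_log_sum {ι : Type*} {s : Finset ι} {p a : ι → ℝ}
    (hp : ∀ i ∈ s, 0 ≤ p i) (hp1 : ∑ i ∈ s, p i = 1) (ha : ∀ i ∈ s, 0 < a i) :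
    ∑ i ∈ s, p i * (log (1 / p i) + log (a i)) ≤ log (∑ i ∈ s, a i) := by
  set A := ∑ i ∈ s, a i
  have hA : 0 < A := sum_pos ha (nonempty_of_sum_ne_zero (f := p) (by rw [hp1]; exact one_ne_zero))
  have hsplit : ∀ i ∈ s, p i * (log (1 / p i) + log (a i / A))
      = p i * (log (1 / p i) + log (a i)) - p i * log A := by
    intro i hi
    rw [log_div (ha i hi).ne' hA.ne']
    ring
  have hnorm : ∑ i ∈ s, p i * (log (1 / p i) + log (a i / A)) ≤ 0 :=
    calc _ ≤ ∑ i ∈ s, (a i / A - p i) :=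
          sum_le_sum fun i hi ↦ mul_log_one_div_add_log_le (hp i hi) (div_pos (ha i hi) hA)
      _ = 0 := by rw [sum_sub_distrib, ← sum_div, div_self hA.ne', hp1, sub_self]
  rw [sum_congr rfl hsplit, sum_sub_distrib, ← sum_mul, hp1, one_mul] at hnorm
  linarith

theorem sum_mul_log_one_div_add_log_choose_le {V : ℕ} {p : ℕ → ℝ} {q : ℝ}
    (hq₀ : 0 < q) (hq₁ : q < 1)
    (hp : ∀ s ∈ range (V + 1), 0 ≤ p s) (hp1 : ∑ s ∈ range (V + 1), p s = 1)
    (hmean : ∑ s ∈ range (V + 1), (s : ℝ) * p s = V * q) :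
    ∑ s ∈ range (V + 1), p s * (log (1 / p s) + log (V.choose s)) ≤ V * binEntropy q := by
  set t := q / (1 - q)
  have hq₁' : 0 < 1 - q := sub_pos.2 hq₁
  have ht : 0 < t := div_pos hq₀ hq₁'
  have hchoose : ∀ s ∈ range (V + 1), (0 : ℝ) < V.choose s := fun s hs ↦
    Nat.cast_pos.2 (Nat.choose_pos (Nat.lt_succ_iff.1 (mem_range.1 hs)))
  have hgibbs := sum_mul_log_one_div_add_log_le_log_sum hp hp1
    (a := fun s ↦ V.choose s * t ^ s) fun s hs ↦ mul_pos (hchoose s hs) (pow_pos ht s)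
  have hbinom : ∑ s ∈ range (V + 1), (V.choose s : ℝ) * t ^ s = (1 - q)⁻¹ ^ V := by
    rw [show (1 - q)⁻¹ = t + 1 by rw [div_add_one hq₁'.ne', add_sub_cancel, one_div], add_pow]
    exact sum_congr rfl fun s _ ↦ by ring
  have hsplit : ∀ s ∈ range (V + 1), p s * (log (1 / p s) + log (V.choose s * t ^ s))
      = p s * (log (1 / p s) + log (V.choose s)) + s * p s * log t := by
    intro s hs
    rw [log_mul (hchoose s hs).ne' (pow_pos ht s).ne', log_pow]
    ring
  rw [sum_congr rfl hsplit, sum_add_distrib, ← sum_mul, hmean, hbinom, log_pow,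
    log_div hq₀.ne' hq₁'.ne', log_inv] at hgibbs
  rw [binEntropy, log_inv, log_inv]
  linarith

theorem apply_le_of_le_succ_of_succ_le {α : Type*} [Preorder α] {f : ℕ → α} {n : ℕ}
    (hup : ∀ k < n, f k ≤ f (k + 1)) (hdown : ∀ k ≥ n, f (k + 1) ≤ f k) (k : ℕ) :
    f k ≤ f n := by
  rcases le_total k n with hk | hk
  · refine monotoneOn_of_le_succ Set.ordConnected_Iic (fun a _ _ ha ↦ ?_) hk le_rfl hk
    rw [Order.succ_eq_add_one] at ha ⊢
    exact hup a ha
  · exact antitoneOn_nat_Ici_of_succ_le hdown (Set.mem_ofPred.2 le_rfl) hk hk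

theorem choose_succ_mul_pow_mul_pow_mul {U k : ℕ} (hk : k < U) (x y : ℕ) :
    U.choose (k + 1) * x ^ (k + 1) * y ^ (U - (k + 1)) * ((k + 1) * y)
      = U.choose k * x ^ k * y ^ (U - k) * ((U - k) * x) := by
  have hchoose := Nat.choose_succ_right_eq U k
  rw [show U - k = U - (k + 1) + 1 by omega] at hchoose ⊢
  calc _ = U.choose (k + 1) * (k + 1) * (x ^ k * x * y ^ (U - (k + 1)) * y) := by ring
    _ = _ := by rw [hchoose]; ring

theorem pow_self_le_succ_mul_choose_mul_pow_mul_pow {U n : ℕ} (hn : n < U) :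
    U ^ U ≤ (U + 1) * (U.choose n * n ^ n * (U - n) ^ (U - n)) := by
  set m := U - n
  set f : ℕ → ℕ := fun k ↦ U.choose k * n ^ k * m ^ (U - k)
  have hm : 0 < m := Nat.sub_pos_of_lt hn
  have hratio (k : ℕ) (hk : k < U) : f (k + 1) * ((k + 1) * m) = f k * ((U - k) * n) :=
    choose_succ_mul_pow_mul_pow_mul hk n m
  have hmax : ∀ k, f k ≤ f n := by
    refine apply_le_of_le_succ_of_succ_le (fun k hk ↦ ?_) (fun k hk ↦ ?_)
    · refine Nat.le_of_mul_le_mul_right ?_ (Nat.mul_pos k.succ_pos hm)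
      rw [hratio k (hk.trans hn)]
      refine Nat.mul_le_mul_left _ ?_
      calc (k + 1) * m ≤ n * m := Nat.mul_le_mul_right _ hk
        _ = m * n := mul_comm _ _
        _ ≤ (U - k) * n := Nat.mul_le_mul_right _ (by omega)
    · rcases lt_or_ge k U with hkU | hkU
      · refine Nat.le_of_mul_le_mul_right ?_ (Nat.mul_pos k.succ_pos hm)
        rw [hratio k hkU]
        refine Nat.mul_le_mul_left _ ?_
        calc (U - k) * n ≤ m * n := Nat.mul_le_mul_right _ (by omega)
          _ = n * m := mul_comm _ _
          _ ≤ (k + 1) * m := Nat.mul_le_mul_right _ (by omega)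
      · simp [f, Nat.choose_eq_zero_of_lt (Nat.lt_succ_of_le hkU)]
  calc U ^ U = (n + m) ^ U := by rw [Nat.add_sub_of_le hn.le]
    _ = ∑ k ∈ range (U + 1), f k := by
        rw [add_pow]
        exact sum_congr rfl fun k _ ↦ by simp only [f, Nat.cast_id]; ring
    _ ≤ ∑ _k ∈ range (U + 1), f n := sum_le_sum fun k _ ↦ hmax k
    _ = (U + 1) * f n := by rw [sum_const, card_range, smul_eq_mul]

theorem mul_binEntropy_div_le_log_choose_add_log {U n : ℕ} (hn₀ : 0 < n) (hn : n < U) :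
    U * binEntropy (n / U) ≤ log (U.choose n) + log (U + 1) := by
  have hU : (0 : ℝ) < U := by exact_mod_cast hn₀.trans hn
  have hn' : (0 : ℝ) < n := by exact_mod_cast hn₀
  have hM : (0 : ℝ) < (U - n : ℕ) := by exact_mod_cast Nat.sub_pos_of_lt hn
  have hC : (0 : ℝ) < U.choose n := by exact_mod_cast Nat.choose_pos hn.le
  have hentropy : U * binEntropy (n / U)
      = U * log U - n * log n - (U - n : ℕ) * log (U - n : ℕ) := by
    rw [binEntropy, log_inv, log_inv, log_div hn'.ne' hU.ne', one_sub_div hU.ne',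
      ← Nat.cast_sub hn.le, log_div hM.ne' hU.ne']
    field_simp
    push_cast [Nat.cast_sub hn.le]
    ring
  have hmax : (U : ℝ) ^ U ≤ (U + 1) * (U.choose n * n ^ n * (U - n : ℕ) ^ (U - n)) := by
    exact_mod_cast pow_self_le_succ_mul_choose_mul_pow_mul_pow hn
  have hlog := log_le_log (by positivity) hmax
  rw [log_mul (by positivity) (by positivity), log_mul (by positivity) (by positivity),
    log_mul (by positivity) (by positivity), log_pow, log_pow, log_pow] at hlog
  rw [hentropy]
  linarith

theorem bucket_entropy_le_log_choose_add_log {L V n : ℕ} (hn : 0 < n) (hnU : n < L * V)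
    {p : ℕ → ℝ} (hp₀ : ∀ s ∈ range (V + 1), 0 ≤ p s) (hp₁ : ∑ s ∈ range (V + 1), p s = 1)
    (hmean : (L : ℝ) * ∑ s ∈ range (V + 1), (s : ℝ) * p s = n) :
    (L : ℝ) * ∑ s ∈ range (V + 1), p s * (log (1 / p s) + log (V.choose s))
      ≤ log ((L * V).choose n) + log (L * V + 1) := by
  obtain ⟨hL, hV⟩ := CanonicallyOrderedAdd.mul_pos.1 (hn.trans hnU)
  have hL' : (L : ℝ) ≠ 0 := by positivity
  have hV' : (V : ℝ) ≠ 0 := by positivity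
  have hU : ((L * V : ℕ) : ℝ) = L * V := Nat.cast_mul L V
  have hq₀ : 0 < (n : ℝ) / (L * V : ℕ) := div_pos (by exact_mod_cast hn) (by positivity)
  have hq₁ : (n : ℝ) / (L * V : ℕ) < 1 := (div_lt_one (by positivity)).2 (by exact_mod_cast hnU)
  have hbucket := sum_mul_log_one_div_add_log_choose_le hq₀ hq₁ hp₀ hp₁ (by
    rw [hU, ← hmean]
    field_simp)
  calc _ ≤ (L : ℝ) * (V * binEntropy (n / (L * V : ℕ))) :=
        mul_le_mul_of_nonneg_left hbucket (by positivity)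
    _ = (L * V : ℕ) * binEntropy (n / (L * V : ℕ)) := by rw [hU]; ring
    _ ≤ _ := by
        rw [← hU]
        exact mul_binEntropy_div_le_log_choose_add_log hn hnU

/-- **Per-bucket encoding lengths sum to at most `log₂ (U choose n) + O(log U)`.**
There is an absolute constant `C > 0` such that: for positive integers
`L, V, n` with `n < L·V` and a probability mass function `p` on `{0,…,V}`
with `L·E_{s∼p}[s] = n`, we have
`L·∑_s p(s)·(log₂(1/p(s)) + log₂ (V choose s)) ≤ log₂ ((L·V) choose n) + C·log₂(L·V)`. -/
theorem bucket_entropy_le_log_choose :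
    ∃ C : ℝ, C > 0 ∧
      ∀ L V n : ℕ, 0 < L → 0 < V → 1 ≤ n → n < L * V →
        ∀ p : ℕ → ℝ,
          (∀ s ∈ Finset.range (V + 1), 0 ≤ p s) →
          (∑ s ∈ Finset.range (V + 1), p s = 1) →
          ((L : ℝ) * ∑ s ∈ Finset.range (V + 1), (s : ℝ) * p s = (n : ℝ)) →
          (L : ℝ) * ∑ s ∈ Finset.range (V + 1),
              p s * (Real.logb 2 (1 / p s) + Real.logb 2 (V.choose s))
            ≤ Real.logb 2 ((L * V).choose n) + C * Real.logb 2 (L * V) := by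
  refine ⟨2, two_pos, fun L V n _ _ hn hnU p hp₀ hp₁ hmean ↦ ?_⟩
  have hln := bucket_entropy_le_log_choose_add_log hn hnU hp₀ hp₁ hmean
  have hLV : (2 : ℝ) ≤ L * V := by exact_mod_cast (by omega : 2 ≤ L * V)
  have hlogU : log (L * V + 1 : ℝ) ≤ 2 * log (L * V : ℝ) :=
    calc _ ≤ log ((L * V : ℝ) ^ 2) := log_le_log (by positivity) (by nlinarith)
      _ = _ := by rw [log_pow]; norm_num
  simp only [logb, ← add_div, mul_div_assoc', ← sum_div]
  exact div_le_div_of_nonneg_right (by linarith) (log_nonneg one_le_two)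
end

section
/- For all sufficiently large natural numbers n the following holds. Let t = ⌈10·log₂ n⌉, let p be a real number with 1/n³ ≤ p ≤ 1, and let m be a positive integer with 2^t·(p − n^{−6}) ≤ m ≤ 2^t. Then log₂ ⌈2^{2t}/m⌉ ≤ log₂(1/p) + t + 1/n². -/
/-!
Write `A = 2^t ≥ n³` and `ε = n⁻³`. Since `p ≥ ε`, the lower bound on `m` gives
`m ≥ A p (1 - ε)`, hence `2^{2t} / m ≤ (A / p)(1 + 2ε)`, and rounding up adds at most
`1 ≤ A ε ≤ (A / p) ε`. Taking `log₂`, the overhead is `log₂ (1 + 3ε) ≤ 6ε ≤ 1 / n²`.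
-/

open Real

lemma pow_le_two_pow_natCeil_mul_logb {x c : ℝ} {k : ℕ} (hx : 1 ≤ x) (hkc : k ≤ c) :
    x ^ k ≤ 2 ^ ⌈c * logb 2 x⌉₊ := by
  rw [← rpow_natCast 2, ← logb_le_iff_le_rpow one_lt_two (by positivity), logb_pow]
  exact (mul_le_mul_of_nonneg_right hkc (logb_nonneg one_lt_two hx)).trans (Nat.le_ceil _)

lemma logb_two_one_add_le {x : ℝ} (hx : 0 ≤ x) : logb 2 (1 + x) ≤ 2 * x := by
  have hlog : log (1 + x) ≤ x := by linarith [log_le_sub_one_of_pos (by linarith : 0 < 1 + x)]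
  have hlog2 : (1 / 2 : ℝ) < log 2 := by linarith [log_two_gt_d9]
  rw [logb, div_le_iff₀ (by linarith)]
  nlinarith

lemma mul_one_sub_le_sub_sq {p ε : ℝ} (hε : 0 ≤ ε) (hεp : ε ≤ p) : p * (1 - ε) ≤ p - ε ^ 2 := by
  nlinarith

lemma one_div_one_sub_le {ε : ℝ} (hε : 0 ≤ ε) (hε' : ε ≤ 1 / 2) : 1 / (1 - ε) ≤ 1 + 2 * ε := by
  rw [div_le_iff₀ (by linarith)]
  nlinarith

/-- Rounding up costs at most `1 ≤ (A / p) ε`, since `p ≤ 1`. -/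
lemma natCeil_sq_div_le {A p ε m : ℝ} (hε : 0 < ε) (hε' : ε ≤ 1 / 2) (hεp : ε ≤ p) (hp : p ≤ 1)
    (hAε : 1 ≤ A * ε) (hm : A * (p - ε ^ 2) ≤ m) :
    (⌈A ^ 2 / m⌉₊ : ℝ) ≤ A / p * (1 + 3 * ε) := by
  have hp0 : 0 < p := hε.trans_le hεp
  have hA : 0 < A := by nlinarith
  have hpε : 0 < p * (1 - ε) := by nlinarith
  have hm' : A * (p * (1 - ε)) ≤ m :=
    (mul_le_mul_of_nonneg_left (mul_one_sub_le_sub_sq hε.le hεp) hA.le).trans hm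
  have hm0 : 0 < m := (mul_pos hA hpε).trans_le hm'
  have hAp : 1 ≤ A / p * ε := by
    calc 1 ≤ A * ε := hAε
      _ ≤ A / p * ε := by gcongr; exact le_div_self hA.le hp0 hp
  calc (⌈A ^ 2 / m⌉₊ : ℝ) ≤ A ^ 2 / m + 1 := (Nat.ceil_lt_add_one (by positivity)).le
    _ ≤ A / p * (1 / (1 - ε)) + A / p * ε := by
        gcongr ?_ + ?_
        calc A ^ 2 / m ≤ A ^ 2 / (A * (p * (1 - ε))) := by gcongr
          _ = A / p * (1 / (1 - ε)) := by field_simp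
    _ ≤ A / p * (1 + 2 * ε) + A / p * ε := by gcongr; exact one_div_one_sub_le hε.le hε'
    _ = A / p * (1 + 3 * ε) := by ring

lemma logb_natCeil_sq_div_le {A p ε m : ℝ} (hε : 0 < ε) (hε' : ε ≤ 1 / 2) (hεp : ε ≤ p)
    (hp : p ≤ 1) (hAε : 1 ≤ A * ε) (hm : A * (p - ε ^ 2) ≤ m) :
    logb 2 ⌈A ^ 2 / m⌉₊ ≤ logb 2 (1 / p) + logb 2 A + 6 * ε := by
  have hp0 : 0 < p := hε.trans_le hεp
  have hA : 0 < A := by nlinarith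
  have hm0 : 0 < m := by nlinarith [mul_one_sub_le_sub_sq hε.le hεp]
  calc logb 2 ⌈A ^ 2 / m⌉₊ ≤ logb 2 (A * (1 / p) * (1 + 3 * ε)) := by
        refine logb_le_logb_of_le one_lt_two (Nat.cast_pos.2 (Nat.ceil_pos.2 (by positivity))) ?_
        rw [← div_eq_mul_one_div]
        exact natCeil_sq_div_le hε hε' hεp hp hAε hm
    _ = logb 2 (1 / p) + logb 2 A + logb 2 (1 + 3 * ε) := by
        rw [logb_mul (by positivity) (by positivity), logb_mul (by positivity) (by positivity)]
        ring
    _ ≤ logb 2 (1 / p) + logb 2 A + 6 * ε := by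
        linarith [logb_two_one_add_le (by positivity : 0 ≤ 3 * ε)]

/-- **Redundancy bound for re-encoding the bucket size.**
For all sufficiently large `n`, with `t = ⌈10·log₂ n⌉`: if `1/n³ ≤ p ≤ 1`
and `m` is a positive integer with `2^t·(p − n^{−6}) ≤ m ≤ 2^t`, then
`log₂ ⌈2^{2t}/m⌉ ≤ log₂(1/p) + t + 1/n²`. -/
theorem logb_ceil_ratio_le :
    ∀ᶠ n : ℕ in Filter.atTop, ∀ t : ℕ, t = ⌈10 * Real.logb 2 n⌉₊ →
      ∀ p : ℝ, 1 / (n : ℝ) ^ 3 ≤ p → p ≤ 1 →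
        ∀ m : ℕ, 0 < m →
          (2 : ℝ) ^ t * (p - 1 / (n : ℝ) ^ 6) ≤ (m : ℝ) → (m : ℝ) ≤ (2 : ℝ) ^ t →
            Real.logb 2 (⌈((2 : ℝ) ^ (2 * t)) / (m : ℝ)⌉₊ : ℝ)
              ≤ Real.logb 2 (1 / p) + (t : ℝ) + 1 / (n : ℝ) ^ 2 := by
  filter_upwards [Filter.eventually_ge_atTop 6] with n hn t ht p hεp hp m _ hm _
  have hn6 : (6 : ℝ) ≤ n := by exact_mod_cast hn
  have hn0 : (0 : ℝ) < n := by linarith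
  have hε' : 1 / (n : ℝ) ^ 3 ≤ 1 / 2 := by
    gcongr; nlinarith [pow_le_pow_left₀ (by norm_num : (0 : ℝ) ≤ 6) hn6 3]
  have hAε : 1 ≤ 2 ^ t * (1 / (n : ℝ) ^ 3) := by
    rw [mul_one_div, le_div_iff₀ (by positivity), one_mul, ht]
    exact pow_le_two_pow_natCeil_mul_logb (by linarith) (by norm_num)
  have h6ε : 6 * (1 / (n : ℝ) ^ 3) ≤ 1 / (n : ℝ) ^ 2 := by
    rw [show 6 * (1 / (n : ℝ) ^ 3) = 6 / n * (1 / (n : ℝ) ^ 2) by field_simp]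
    exact mul_le_of_le_one_left (by positivity) ((div_le_one hn0).2 hn6)
  have key := logb_natCeil_sq_div_le (m := m) (by positivity) hε' hεp hp hAε
    (by rwa [show (1 / (n : ℝ) ^ 3) ^ 2 = 1 / (n : ℝ) ^ 6 by ring])
  rw [← pow_mul, mul_comm t, logb_pow, logb_self_eq_one one_lt_two, mul_one] at key
  linarith
end
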